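/- Let A be an epsilon-strongly G-graded ring, R = A_1, and g ∈ G. Then A_g contains an epsilon-invertible element if and only if A_g and Rε_g are isomorphic as left R-modules. -/

import Mathlib

/-- A `G`-grading on a unital ring `A`: a family of additive subgroups with
`A_g A_h ⊆ A_{gh}`, `1 ∈ A₁`, whose internal direct sum is `A`. -/
structure RingGrading (G : Type*) [Group G] [DecidableEq G]
    (A : Type*) [Ring A] where
  comp : G → AddSubgroup A
  one_mem : (1 : A) ∈ comp 1
  mul_mem : ∀ ⦃g h : G⦄ ⦃a b : A⦄, a ∈ comp g → b ∈ comp h → a * b ∈ comp (g * h)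
  isInternal : DirectSum.IsInternal comp

variable {G : Type*} [Group G] [DecidableEq G] {A : Type*} [Ring A]

/-- The additive subgroup `S T` generated by products of elements of `S` and `T`. -/
def sgMul (S T : AddSubgroup A) : AddSubgroup A :=
  AddSubgroup.closure {x : A | ∃ s ∈ S, ∃ t ∈ T, x = s * t}

/-- `ε` is a family of epsilon-elements for the grading `𝒜`:
`ε_g ∈ A_g A_{g⁻¹}` and `ε_g a = a = a ε_{g⁻¹}` for all `a ∈ A_g`. -/
structure IsEpsilonFamily (𝒜 : RingGrading G A) (ε : G → A) : Prop where
  mem : ∀ g : G, ε g ∈ sgMul (𝒜.comp g) (𝒜.comp g⁻¹)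
  mul_left : ∀ g : G, ∀ a ∈ 𝒜.comp g, ε g * a = a
  mul_right : ∀ g : G, ∀ a ∈ 𝒜.comp g, a * ε g⁻¹ = a

/-- `𝒜` is an epsilon-strongly graded ring. -/
def IsEpsilonStrong (𝒜 : RingGrading G A) : Prop :=
  ∃ ε : G → A, IsEpsilonFamily 𝒜 ε

/-- The base ring `R = A₁` as a subring of `A`. -/
def RingGrading.base (𝒜 : RingGrading G A) : Subring A where
  carrier := 𝒜.comp 1
  zero_mem' := zero_mem _
  one_mem' := 𝒜.one_mem
  add_mem' := fun ha hb => add_mem ha hb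
  neg_mem' := fun ha => neg_mem ha
  mul_mem' := fun ha hb => by simpa using 𝒜.mul_mem ha hb

/-- The homogeneous component `A_g` as a left module over the base ring `R = A₁`. -/
def RingGrading.compSub (𝒜 : RingGrading G A) (g : G) : Submodule ↥𝒜.base A where
  carrier := 𝒜.comp g
  zero_mem' := zero_mem _
  add_mem' := fun ha hb => add_mem ha hb
  smul_mem' := fun r a ha => by
    show (r : A) * a ∈ _
    simpa using 𝒜.mul_mem r.2 ha

/-- `R x = {r x : r ∈ R}` as a left `R`-submodule of `A`, where `R = A₁`. -/
def RingGrading.leftSpan (𝒜 : RingGrading G A) (x : A) : Submodule ↥𝒜.base A where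
  carrier := {y : A | ∃ r ∈ 𝒜.comp 1, y = r * x}
  zero_mem' := ⟨0, zero_mem _, (zero_mul x).symm⟩
  add_mem' := by
    rintro a b ⟨r, hr, rfl⟩ ⟨s, hs, rfl⟩
    exact ⟨r + s, add_mem hr hs, (add_mul r s x).symm⟩
  smul_mem' := by
    rintro c y ⟨r, hr, rfl⟩
    exact ⟨(c : A) * r, by simpa using 𝒜.mul_mem c.2 hr, (mul_assoc (c : A) r x).symm⟩


lemma sgMul_le_comp (𝒜 : RingGrading G A) (g h : G) :
    sgMul (𝒜.comp g) (𝒜.comp h) ≤ 𝒜.comp (g * h) := by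
  rw [sgMul, AddSubgroup.closure_le]
  rintro x ⟨s, hs, t, ht, rfl⟩
  exact 𝒜.mul_mem hs ht

lemma eps_mul_self_mem {𝒜 : RingGrading G A} {ε : G → A} (hε : IsEpsilonFamily 𝒜 ε) (g : G) :
    ∀ x ∈ sgMul (𝒜.comp g) (𝒜.comp g⁻¹), ε g * x = x := by
  intro x hx
  refine AddSubgroup.closure_induction ?_ ?_ ?_ ?_ hx
  · rintro y ⟨s, hs, t, ht, rfl⟩
    rw [← mul_assoc, hε.mul_left g s hs]
  · exact mul_zero _
  · intro y z _ _ hy hz; rw [mul_add, hy, hz]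
  · intro y _ hy; rw [mul_neg, hy]

lemma eps_idem {𝒜 : RingGrading G A} {ε : G → A} (hε : IsEpsilonFamily 𝒜 ε) (g : G) :
    ε g * ε g = ε g :=
  eps_mul_self_mem hε g _ (hε.mem g)

lemma mem_mul_eps {𝒜 : RingGrading G A} {ε : G → A} (hε : IsEpsilonFamily 𝒜 ε) {g : G}
    {b : A} (hb : b ∈ 𝒜.comp g⁻¹) : b * ε g = b := by
  have := hε.mul_right g⁻¹ b hb
  rwa [inv_inv] at this

set_option synthInstance.maxHeartbeats 1000000 in
set_option maxHeartbeats 1000000 in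
/-- For an epsilon-strongly graded ring `A` with `R = A₁` and `g ∈ G`:
`A_g` contains an epsilon-invertible element iff `A_g ≅ R ε_g` as left `R`-modules. -/
theorem epsilonInvertible_iff_iso (𝒜 : RingGrading G A) (ε : G → A)
    (hε : IsEpsilonFamily 𝒜 ε) (g : G) :
    (∃ a ∈ 𝒜.comp g, ∃ b ∈ 𝒜.comp g⁻¹, a * b = ε g ∧ b * a = ε g⁻¹) ↔
      Nonempty (↥(𝒜.compSub g) ≃ₗ[↥𝒜.base] ↥(𝒜.leftSpan (ε g))) := by
  constructor
  · rintro ⟨a, ha, b, hb, hab, hba⟩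
    refine ⟨{
      toFun := fun x => ⟨(x : A) * b, (x : A) * b,
        by simpa using 𝒜.mul_mem x.2 hb,
        by rw [mul_assoc, mem_mul_eps hε hb]⟩
      map_add' := fun x y => by
        apply Subtype.ext
        simp [add_mul]
      map_smul' := fun r x => by
        apply Subtype.ext
        show ((r : A) * (x : A)) * b = (r : A) * ((x : A) * b)
        rw [mul_assoc]
      invFun := fun y => ⟨(y : A) * a, by
        obtain ⟨r, hr, hy⟩ := y.2
        rw [hy, mul_assoc, hε.mul_left g a ha]
        exact (show r * a ∈ 𝒜.comp g by simpa using 𝒜.mul_mem hr ha)⟩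
      left_inv := fun x => by
        apply Subtype.ext
        show ((x : A) * b) * a = (x : A)
        rw [mul_assoc, hba]
        exact hε.mul_right g _ x.2
      right_inv := fun y => by
        apply Subtype.ext
        show ((y : A) * a) * b = (y : A)
        obtain ⟨r, hr, hy⟩ := y.2
        rw [mul_assoc, hab, hy, mul_assoc, eps_idem hε g]
    }⟩
  · rintro ⟨φ⟩
    have hegR : ε g ∈ 𝒜.comp 1 := by
      simpa using sgMul_le_comp 𝒜 g g⁻¹ (hε.mem g)
    have hegSpan : ε g ∈ 𝒜.leftSpan (ε g) := ⟨ε g, hegR, (eps_idem hε g).symm⟩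
    set egE : ↥(𝒜.leftSpan (ε g)) := ⟨ε g, hegSpan⟩ with hegE
    set aS : ↥(𝒜.compSub g) := φ.symm egE with haS
    have ha : (aS : A) ∈ 𝒜.comp g := aS.2
    -- every element of A_g is of the form r * a
    have hgen : ∀ x ∈ 𝒜.comp g, ∃ r ∈ 𝒜.comp 1, x = r * (aS : A) := by
      intro x hx
      obtain ⟨r, hr, hy⟩ := (φ ⟨x, hx⟩).2
      refine ⟨r, hr, ?_⟩
      have h1 : φ ⟨x, hx⟩ = (⟨r, hr⟩ : ↥𝒜.base) • egE := by
        apply Subtype.ext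
        exact hy
      have h2 : (⟨x, hx⟩ : ↥(𝒜.compSub g)) = (⟨r, hr⟩ : ↥𝒜.base) • aS := by
        rw [haS, ← map_smul φ.symm, ← h1, LinearEquiv.symm_apply_apply]
      exact congrArg Subtype.val h2
    -- find b with b * a = ε g⁻¹
    have hT : ∃ b ∈ 𝒜.comp g⁻¹, b * (aS : A) = ε g⁻¹ := by
      let T : AddSubgroup A :=
        { carrier := {y : A | ∃ c ∈ 𝒜.comp g⁻¹, y = c * (aS : A)}
          zero_mem' := ⟨0, zero_mem _, (zero_mul _).symm⟩
          add_mem' := by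
            rintro y z ⟨c, hc, rfl⟩ ⟨d, hd, rfl⟩
            exact ⟨c + d, add_mem hc hd, (add_mul _ _ _).symm⟩
          neg_mem' := by
            rintro y ⟨c, hc, rfl⟩
            exact ⟨-c, neg_mem hc, (neg_mul _ _).symm⟩ }
      have hle : sgMul (𝒜.comp g⁻¹) (𝒜.comp g) ≤ T := by
        rw [sgMul, AddSubgroup.closure_le]
        rintro y ⟨c, hc, x, hx, rfl⟩
        obtain ⟨r, hr, rfl⟩ := hgen x hx
        exact ⟨c * r, by simpa using 𝒜.mul_mem hc hr, (mul_assoc _ _ _).symm⟩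
      obtain ⟨b, hb, hba⟩ := hle (by simpa using hε.mem g⁻¹)
      exact ⟨b, hb, hba.symm⟩
    obtain ⟨b, hb, hba⟩ := hT
    refine ⟨aS, ha, b, hb, ?_, hba⟩
    have habR : (aS : A) * b ∈ 𝒜.comp 1 := by simpa using 𝒜.mul_mem ha hb
    have hfix : (⟨(aS : A) * b, habR⟩ : ↥𝒜.base) • aS = aS := by
      apply Subtype.ext
      show ((aS : A) * b) * (aS : A) = (aS : A)
      rw [mul_assoc, hba]
      exact hε.mul_right g _ ha
    have hphi : φ aS = egE := by rw [haS, LinearEquiv.apply_symm_apply]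
    have h3 : (⟨(aS : A) * b, habR⟩ : ↥𝒜.base) • egE = egE := by
      rw [← hphi, ← map_smul, hfix]
    have h4 : ((aS : A) * b) * ε g = ε g := congrArg Subtype.val h3
    rw [mul_assoc, mem_mul_eps hε hb] at h4
    exact h4
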